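/- The Koszul complex of the symmetric algebra: for a finite-dimensional vector space V over a field of characteristic 0, the complex with terms Sym^m(V) ⊗ Λ^n(V) and differential d(a ⊗ (x∧ω)) = ax ⊗ ω (extended linearly, contracting one exterior factor into the symmetric part) is exact except at the term Sym⁰(V) ⊗ Λ⁰(V), where the homology is the ground field. -/

import Mathlib

set_option synthInstance.maxHeartbeats 400000

open TensorProduct PiTensorProduct

variable (k V : Type) [Field k] [CharZero k] [AddCommGroup V] [Module k V]
  [FiniteDimensional k V]

/-- The subspace of `V^{⊗m}` spanned by all differences `t − σ·t`, `σ` a permutation. -/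
noncomputable def symRel (m : ℕ) : Submodule k (⨂[k]^m V) :=
  Submodule.span k
    {x | ∃ (t : ⨂[k]^m V) (σ : Equiv.Perm (Fin m)),
      x = t - PiTensorProduct.reindex k (fun _ : Fin m => V) σ t}

/-- The `m`-th symmetric power `Sym^m(V)`. -/
noncomputable def SymPow (m : ℕ) : Type _ := (⨂[k]^m V) ⧸ symRel k V m

noncomputable instance (m : ℕ) : AddCommGroup (SymPow k V m) :=
  inferInstanceAs (AddCommGroup ((⨂[k]^m V) ⧸ symRel k V m))

noncomputable instance (m : ℕ) : Module k (SymPow k V m) :=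
  inferInstanceAs (Module k ((⨂[k]^m V) ⧸ symRel k V m))

/-- The class of the decomposable tensor `v₁ ⊗ ⋯ ⊗ v_m` in `Sym^m(V)`,
i.e. the product `v₁⋯v_m`. -/
noncomputable def symGen {m : ℕ} (v : Fin m → V) : SymPow k V m :=
  (symRel k V m).mkQ (PiTensorProduct.tprod k v)

/-- The wedge `x₁ ∧ ⋯ ∧ x_n` as an element of the `n`-th exterior power `Λⁿ(V)`. -/
noncomputable def wedgeGen {n : ℕ} (x : Fin n → V) : ⋀[k]^n V :=
  ⟨ExteriorAlgebra.ιMulti k n x, ExteriorAlgebra.ιMulti_range k n (Set.mem_range_self x)⟩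

/-- The terms `Sym^m(V) ⊗ Λⁿ(V)` of the Koszul complex. -/
noncomputable def KosTerm (m n : ℕ) : Type _ := SymPow k V m ⊗[k] ⋀[k]^n V

noncomputable instance (m n : ℕ) : AddCommGroup (KosTerm k V m n) :=
  inferInstanceAs (AddCommGroup (SymPow k V m ⊗[k] ⋀[k]^n V))

noncomputable instance (m n : ℕ) : Module k (KosTerm k V m n) :=
  inferInstanceAs (Module k (SymPow k V m ⊗[k] ⋀[k]^n V))

set_option linter.unusedSectionVars false
set_option maxHeartbeats 1000000

noncomputable def wMul {n : ℕ} : V →ₗ[k] (⋀[k]^n V) →ₗ[k] ⋀[k]^(n+1) V :=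
  LinearMap.mk₂ k
    (fun y ω => ⟨ExteriorAlgebra.ι k y * (ω : ExteriorAlgebra k V), by
      have : (⋀[k]^(n+1) V) = LinearMap.range (ExteriorAlgebra.ι k (M := V))
          * LinearMap.range (ExteriorAlgebra.ι k (M := V)) ^ n := by
        rw [← pow_succ']
      rw [this]
      exact Submodule.mul_mem_mul (LinearMap.mem_range_self _ _) ω.2⟩)
    (fun y y' ω => by ext; simp [add_mul])
    (fun c y ω => by ext; simp)
    (fun y ω ω' => by ext; simp [mul_add])
    (fun c y ω => by ext; simp)

/-- symGen as a multilinear map. -/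
noncomputable def symGenM (m : ℕ) : MultilinearMap k (fun _ : Fin m => V) (SymPow k V m) :=
  (symRel k V m).mkQ.compMultilinearMap (PiTensorProduct.tprod k)

lemma symGenM_apply {m : ℕ} (v : Fin m → V) : symGenM k V m v = symGen k V v := rfl

/-- The basic bilinear-multilinear gadget for `sMap`:
`B x v = (ω ↦ symGen v ⊗ (x ∧ ω))`. -/
noncomputable def Bmap (m n : ℕ) :
    V →ₗ[k] MultilinearMap k (fun _ : Fin m => V)
      ((⋀[k]^n V) →ₗ[k] KosTerm k V m (n+1)) where
  toFun x := ((TensorProduct.mk k (SymPow k V m) (⋀[k]^(n+1) V)).compl₂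
      (wMul k V x)).compMultilinearMap (symGenM k V m)
  map_add' x y := by
    refine MultilinearMap.ext fun v => LinearMap.ext fun ω => ?_
    show symGen k V v ⊗ₜ[k] (wMul k V (x + y) ω)
      = symGen k V v ⊗ₜ[k] (wMul k V x ω) + symGen k V v ⊗ₜ[k] (wMul k V y ω)
    rw [map_add, LinearMap.add_apply, TensorProduct.tmul_add]
  map_smul' c x := by
    refine MultilinearMap.ext fun v => LinearMap.ext fun ω => ?_
    show symGen k V v ⊗ₜ[k] (wMul k V (c • x) ω) = c • (symGen k V v ⊗ₜ[k] (wMul k V x ω))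
    rw [map_smul, LinearMap.smul_apply, TensorProduct.tmul_smul]

lemma Bmap_apply {m n : ℕ} (x : V) (v : Fin m → V) (ω : ⋀[k]^n V) :
    Bmap k V m n x v ω = symGen k V v ⊗ₜ[k] (wMul k V x ω) := rfl

/-- The multilinear map underlying `sMap`. -/
noncomputable def GM (m n : ℕ) :
    MultilinearMap k (fun _ : Fin (m+1) => V)
      ((⋀[k]^n V) →ₗ[k] KosTerm k V m (n+1)) :=
  ∑ j : Fin (m+1),
    ((Bmap k V m n).uncurryLeft (n := m)).domDomCongr (j.cycleRange.symm : Equiv.Perm (Fin (m+1)))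

lemma GM_apply {m n : ℕ} (v : Fin (m+1) → V) :
    GM k V m n v = ∑ j : Fin (m+1), Bmap k V m n (v j) (v ∘ j.succAbove) := by
  rw [GM, MultilinearMap.sum_apply]
  refine Finset.sum_congr rfl fun j _ => ?_
  rw [MultilinearMap.domDomCongr_apply, LinearMap.uncurryLeft_apply]
  congr 1
  · rw [Fin.cycleRange_symm_zero]
  · funext l
    show v (j.cycleRange.symm (Fin.succ l)) = v (j.succAbove l)
    rw [Fin.cycleRange_symm_succ]

lemma wMul_wedgeGen {n : ℕ} (y : V) (x : Fin n → V) :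
    wMul k V y (wedgeGen k V x) = wedgeGen k V (Fin.cons y x) := by
  ext
  show ExteriorAlgebra.ι k y * ExteriorAlgebra.ιMulti k n x
      = ExteriorAlgebra.ιMulti k (n+1) (Fin.cons y x)
  rw [ExteriorAlgebra.ιMulti_succ_apply]
  have h1 : Matrix.vecTail (Fin.cons y x) = x := by
    funext l
    simp [Matrix.vecTail, Function.comp]
  rw [h1]
  simp
-- continuing: GM symmetry and sMap
lemma symGen_comp_perm' {m : ℕ} (v : Fin m → V) (σ : Equiv.Perm (Fin m)) :
    symGen k V (v ∘ σ) = symGen k V v := by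
  have h1 : PiTensorProduct.reindex k (fun _ : Fin m => V) σ⁻¹ (PiTensorProduct.tprod k v)
      = PiTensorProduct.tprod k (v ∘ σ) := by
    rw [PiTensorProduct.reindex_tprod]; rfl
  have hmem : (PiTensorProduct.tprod k v : ⨂[k]^m V) - PiTensorProduct.tprod k (v ∘ σ)
      ∈ symRel k V m := by
    rw [← h1]
    exact Submodule.subset_span ⟨PiTensorProduct.tprod k v, σ⁻¹, rfl⟩
  exact ((Submodule.Quotient.eq (symRel k V m)).2 hmem).symm

lemma exists_perm_comp {m M : ℕ} (φ ψ : Fin m → Fin M) (hφ : Function.Injective φ)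
    (hψ : Function.Injective ψ) (h : Set.range φ = Set.range ψ) :
    ∃ τ : Equiv.Perm (Fin m), ψ ∘ τ = φ := by
  let e1 : Fin m ≃ Set.range φ := Equiv.ofInjective φ hφ
  let e2 : Fin m ≃ Set.range ψ := Equiv.ofInjective ψ hψ
  refine ⟨e1.trans ((Equiv.setCongr h).trans e2.symm), ?_⟩
  funext i
  show ψ (e2.symm (Equiv.setCongr h (e1 i))) = φ i
  have : (e2 (e2.symm (Equiv.setCongr h (e1 i))) : Fin M) = ((Equiv.setCongr h (e1 i) : Fin M)) := by
    rw [Equiv.apply_symm_apply]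
  simpa [e2, e1, Equiv.ofInjective] using this

lemma symGen_comp_eq {m M : ℕ} (w : Fin M → V) (φ ψ : Fin m → Fin M)
    (hφ : Function.Injective φ) (hψ : Function.Injective ψ)
    (h : Set.range φ = Set.range ψ) :
    symGen k V (w ∘ φ) = symGen k V (w ∘ ψ) := by
  obtain ⟨τ, hτ⟩ := exists_perm_comp φ ψ hφ hψ h
  rw [← hτ, ← Function.comp_assoc]
  exact symGen_comp_perm' k V (w ∘ ψ) τ

lemma symGen_comp_perm_succAbove {m : ℕ} (v : Fin (m+1) → V) (τ : Equiv.Perm (Fin (m+1)))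
    (j : Fin (m+1)) :
    symGen k V (v ∘ (τ ∘ j.succAbove)) = symGen k V (v ∘ (τ j).succAbove) := by
  apply symGen_comp_eq
  · exact τ.injective.comp (Fin.succAbove_right_injective)
  · exact Fin.succAbove_right_injective
  · rw [Set.range_comp, Fin.range_succAbove, Fin.range_succAbove]
    rw [Set.image_compl_eq τ.bijective]
    simp

lemma GM_comp_perm {m n : ℕ} (v : Fin (m+1) → V) (τ : Equiv.Perm (Fin (m+1))) :
    GM k V m n (v ∘ τ) = GM k V m n v := by
  rw [GM_apply, GM_apply]
  refine Fintype.sum_equiv τ _ _ fun j => ?_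
  have h1 : (v ∘ τ) j = v (τ j) := rfl
  have h2 : (v ∘ τ) ∘ j.succAbove = v ∘ (τ ∘ j.succAbove) := rfl
  rw [h1, h2]
  refine LinearMap.ext fun ω => ?_
  rw [Bmap_apply, Bmap_apply, symGen_comp_perm_succAbove]

/-- The homotopy map `s : Sym^{m+1} ⊗ Λ^n → Sym^m ⊗ Λ^{n+1}`. -/
noncomputable def sMap (m n : ℕ) : KosTerm k V (m+1) n →ₗ[k] KosTerm k V m (n+1) :=
  TensorProduct.lift (Submodule.liftQ (symRel k V (m+1)) (PiTensorProduct.lift (GM k V m n))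
    (by
      rw [symRel, Submodule.span_le]
      rintro _ ⟨t, σ, rfl⟩
      rw [SetLike.mem_coe, LinearMap.mem_ker, map_sub, sub_eq_zero]
      have : (PiTensorProduct.lift (GM k V m n)) ∘ₗ
          (PiTensorProduct.reindex k (fun _ : Fin (m+1) => V) σ).toLinearMap
          = PiTensorProduct.lift (GM k V m n) := by
        apply PiTensorProduct.ext
        apply MultilinearMap.ext
        intro v
        simp only [LinearMap.compMultilinearMap_apply, LinearMap.coe_comp, Function.comp_apply,
          LinearEquiv.coe_coe, PiTensorProduct.reindex_tprod, PiTensorProduct.lift.tprod]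
        exact GM_comp_perm k V v σ.symm
      exact (LinearMap.congr_fun this t).symm))

lemma sMap_apply {m n : ℕ} (v : Fin (m+1) → V) (x : Fin n → V) :
    sMap k V m n (symGen k V v ⊗ₜ[k] wedgeGen k V x)
      = ∑ j : Fin (m+1),
          symGen k V (v ∘ j.succAbove) ⊗ₜ[k] wedgeGen k V (Fin.cons (v j) x) := by
  rw [sMap]
  erw [TensorProduct.lift.tmul]
  rw [symGen, Submodule.mkQ_apply]
  erw [Submodule.liftQ_apply]
  rw [PiTensorProduct.lift.tprod, GM_apply, LinearMap.sum_apply]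
  refine Finset.sum_congr rfl fun j _ => ?_
  rw [Bmap_apply]
  congr 1
  exact wMul_wedgeGen k V (v j) x

lemma snoc_comp_castSucc_succAbove {m : ℕ} (v : Fin (m+1) → V) (c : V) (j : Fin (m+1)) :
    (Fin.snoc v c : Fin (m+2) → V) ∘ (Fin.castSucc j).succAbove
      = Fin.snoc (v ∘ j.succAbove) c := by
  funext l
  induction l using Fin.lastCases with
  | last =>
    rw [Function.comp_apply,
      Fin.succAbove_of_le_castSucc _ _ (Fin.castSucc_le_castSucc_iff.mpr (Fin.le_last j)),
      Fin.succ_last, Fin.snoc_last, Fin.snoc_last]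
  | cast l' =>
    rw [Function.comp_apply, Fin.castSucc_succAbove_castSucc, Fin.snoc_castSucc,
      Fin.snoc_castSucc]
    rfl

lemma cons_comp_succ_succAbove {n : ℕ} (y : V) (x : Fin (n+1) → V) (i : Fin (n+1)) :
    (Fin.cons y x : Fin (n+2) → V) ∘ (Fin.succ i).succAbove = Fin.cons y (x ∘ i.succAbove) := by
  funext l
  induction l using Fin.cases with
  | zero => simp
  | succ l' => simp [Fin.succ_succAbove_succ]

lemma cons_comp_zero_succAbove {n : ℕ} (y : V) (x : Fin (n+1) → V) :
    (Fin.cons y x : Fin (n+2) → V) ∘ (0 : Fin (n+2)).succAbove = x := by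
  funext l
  simp [Fin.succAbove_zero]

lemma snoc_comp_last_succAbove {m : ℕ} (v : Fin (m+1) → V) (c : V) :
    (Fin.snoc v c : Fin (m+2) → V) ∘ (Fin.last (m+1)).succAbove = v := by
  rw [Fin.succAbove_last]
  exact funext fun l => Fin.snoc_castSucc _ _ _

lemma symGen_snoc_self {m : ℕ} (v : Fin (m+1) → V) (j : Fin (m+1)) :
    symGen k V (Fin.snoc (v ∘ j.succAbove) (v j)) = symGen k V v := by
  have hc : (Fin.snoc (v ∘ j.succAbove) (v j) : Fin (m+1) → V)
      = v ∘ (Fin.snoc j.succAbove j : Fin (m+1) → Fin (m+1)) := by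
    rw [Fin.comp_snoc]
  have hinj : Function.Injective (Fin.snoc j.succAbove j : Fin (m+1) → Fin (m+1)) := by
    intro a b hab
    induction a using Fin.lastCases with
    | last =>
      induction b using Fin.lastCases with
      | last => rfl
      | cast b =>
        rw [Fin.snoc_last, Fin.snoc_castSucc] at hab
        exact absurd hab.symm (Fin.succAbove_ne j b)
    | cast a =>
      induction b using Fin.lastCases with
      | last =>
        rw [Fin.snoc_last, Fin.snoc_castSucc] at hab
        exact absurd hab (Fin.succAbove_ne j a)
      | cast b =>
        rw [Fin.snoc_castSucc, Fin.snoc_castSucc] at hab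
        rw [Fin.succAbove_right_inj.mp hab]
  rw [hc]
  have := symGen_comp_eq k V v (Fin.snoc j.succAbove j : Fin (m+1) → Fin (m+1)) id hinj
    Function.injective_id
    (by
      rw [Set.range_id, Set.range_eq_univ]
      exact Finite.surjective_of_injective hinj)
  simpa using this

lemma symGen_snoc_snoc_swap {m : ℕ} (v : Fin m → V) (a b : V) :
    symGen k V (Fin.snoc (Fin.snoc v a) b) = symGen k V (Fin.snoc (Fin.snoc v b) a) := by
  have hc : (Fin.snoc (Fin.snoc v b) a : Fin (m+2) → V)
        ∘ (Equiv.swap (Fin.last (m+1)) (Fin.castSucc (Fin.last m)))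
      = Fin.snoc (Fin.snoc v a) b := by
    funext i
    induction i using Fin.lastCases with
    | last => simp [Equiv.swap_apply_left]
    | cast l =>
      induction l using Fin.lastCases with
      | last => simp [Equiv.swap_apply_right]
      | cast l' =>
        have h1 : (Fin.castSucc (Fin.castSucc l')) ≠ Fin.last (m+1) :=
          Fin.ne_of_lt (Fin.castSucc_lt_last _)
        have h2 : (Fin.castSucc (Fin.castSucc l')) ≠ Fin.castSucc (Fin.last m) := by
          simp [Fin.castSucc_inj]
        simp [Function.comp, Equiv.swap_apply_of_ne_of_ne h1 h2]
  rw [← hc]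
  exact (symGen_comp_perm' k V _ _)

lemma wedgeGen_cons_succAbove {n : ℕ} (x : Fin (n+1) → V) (i : Fin (n+1)) :
    wedgeGen k V (Fin.cons (x i) (x ∘ i.succAbove)) = ((-1 : k) ^ (i : ℕ)) • wedgeGen k V x := by
  have hfun : (Fin.cons (x i) (x ∘ i.succAbove) : Fin (n+1) → V) = x ∘ (i.cycleRange.symm) := by
    funext l
    induction l using Fin.cases with
    | zero => simp [Fin.cycleRange_symm_zero]
    | succ j => simp [Fin.cycleRange_symm_succ]
  apply Subtype.ext
  show ExteriorAlgebra.ιMulti k (n+1) _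
    = ((((-1:k)^(i:ℕ)) • wedgeGen k V x : ⋀[k]^(n+1) V) : ExteriorAlgebra k V)
  rw [Submodule.coe_smul]
  rw [hfun]
  have := (ExteriorAlgebra.ιMulti k (n+1) (M := V)).map_perm x (i.cycleRange.symm)
  rw [this]
  have hsign : Equiv.Perm.sign (i.cycleRange.symm) = (-1 : ℤˣ)^(i : ℕ) := by
    rw [Equiv.Perm.sign_symm, Fin.sign_cycleRange]
  rw [hsign]
  have hval : ((wedgeGen k V x : ⋀[k]^(n+1) V) : ExteriorAlgebra k V)
      = ExteriorAlgebra.ιMulti k (n+1) x := rfl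
  rw [hval, Units.smul_def]
  have h2 : (((-1 : ℤˣ)^(i:ℕ) : ℤˣ) : ℤ) = (-1 : ℤ)^(i:ℕ) := by push_cast; ring
  rw [h2, ← Int.cast_smul_eq_zsmul k]
  push_cast
  ring_nf

lemma symGen_span (m : ℕ) :
    Submodule.span k (Set.range (symGen k V (m := m))) = ⊤ := by
  rw [Submodule.eq_top_iff']
  intro z
  obtain ⟨t, rfl⟩ := (symRel k V m).mkQ_surjective z
  have ht : t ∈ Submodule.span k (Set.range (tprod k (s := fun _ : Fin m => V))) := by
    rw [PiTensorProduct.span_tprod_eq_top]; trivial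
  induction ht using Submodule.span_induction with
  | mem x hx =>
    obtain ⟨v, rfl⟩ := hx
    exact Submodule.subset_span ⟨v, rfl⟩
  | zero => rw [map_zero]; exact Submodule.zero_mem _
  | add x y _ _ hx hy => rw [map_add]; exact Submodule.add_mem _ hx hy
  | smul c x _ hx => rw [map_smul]; exact Submodule.smul_mem _ c hx

lemma wedgeGen_span (n : ℕ) :
    Submodule.span k (Set.range (wedgeGen k V (n := n))) = ⊤ := by
  apply Submodule.map_injective_of_injective ((⋀[k]^n V).injective_subtype)
  rw [Submodule.map_span, Submodule.map_subtype_top, ← Set.range_comp]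
  have : ((⋀[k]^n V).subtype ∘ wedgeGen k V (n := n)) = ExteriorAlgebra.ιMulti k n := rfl
  rw [this, ExteriorAlgebra.ιMulti_span_fixedDegree]

lemma kosExt {m n : ℕ} {W : Type*} [AddCommGroup W] [Module k W]
    {f g : KosTerm k V m n →ₗ[k] W}
    (h : ∀ (v : Fin m → V) (x : Fin n → V),
      f (symGen k V v ⊗ₜ[k] wedgeGen k V x) = g (symGen k V v ⊗ₜ[k] wedgeGen k V x)) :
    f = g := by
  apply TensorProduct.ext
  apply LinearMap.ext_on_range (symGen_span k V m)
  intro v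
  apply LinearMap.ext_on_range (wedgeGen_span k V n)
  intro x
  exact h v x
lemma kos_map_sum {m n : ℕ} {W : Type*} [AddCommGroup W] [Module k W]
    (f : KosTerm k V m n →ₗ[k] W) {ι : Type*} (s : Finset ι)
    (g : ι → SymPow k V m ⊗[k] ⋀[k]^n V) :
    f (∑ i ∈ s, g i : SymPow k V m ⊗[k] ⋀[k]^n V) = ∑ i ∈ s, f (g i) :=
  map_sum f g s
lemma kos_map_smul {m n : ℕ} {W : Type*} [AddCommGroup W] [Module k W]
    (f : KosTerm k V m n →ₗ[k] W) (c : k) (t : SymPow k V m ⊗[k] ⋀[k]^n V) :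
    f (c • t : SymPow k V m ⊗[k] ⋀[k]^n V) = c • f t :=
  map_smul f c t
lemma homotopy_main
    (d : ∀ m n : ℕ, KosTerm k V m (n + 1) →ₗ[k] KosTerm k V (m + 1) n)
    (hd : ∀ (m n : ℕ) (v : Fin m → V) (x : Fin (n + 1) → V),
      d m n (symGen k V v ⊗ₜ[k] wedgeGen k V x) =
        ∑ i : Fin (n + 1),
          ((-1 : k) ^ (i : ℕ)) •
            (symGen k V (Fin.snoc v (x i)) ⊗ₜ[k] wedgeGen k V (x ∘ i.succAbove)))
    (m n : ℕ) :
    (d m (n+1)) ∘ₗ (sMap k V m (n+1)) + (sMap k V (m+1) n) ∘ₗ (d (m+1) n)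
      = (((m + n + 2 : ℕ) : k)) • LinearMap.id := by
  apply kosExt k V
  intro v x
  set g : KosTerm k V (m+1) (n+1) := symGen k V v ⊗ₜ[k] wedgeGen k V x with hg
  rw [LinearMap.add_apply, LinearMap.comp_apply, LinearMap.comp_apply, LinearMap.smul_apply,
    LinearMap.id_apply]
  set E : Fin (m+1) → Fin (n+1) → KosTerm k V (m+1) (n+1) := fun j i =>
    symGen k V (Fin.snoc (v ∘ j.succAbove) (x i)) ⊗ₜ[k]
      wedgeGen k V (Fin.cons (v j) (x ∘ i.succAbove)) with hE
  -- Term A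
  have hA : d m (n+1) (sMap k V m (n+1) g)
      = (((m+1 : ℕ) : k)) • g + ∑ j : Fin (m+1), ∑ i : Fin (n+1), (-(-1:k)^(i:ℕ)) • E j i := by
    rw [hg, sMap_apply, kos_map_sum]
    have hterm : ∀ j : Fin (m+1),
        d m (n+1) (symGen k V (v ∘ j.succAbove) ⊗ₜ[k] wedgeGen k V (Fin.cons (v j) x))
          = g + ∑ i : Fin (n+1), (-(-1:k)^(i:ℕ)) • E j i := by
      intro j
      rw [hd m (n+1)]
      rw [Fin.sum_univ_succ]
      congr 1
      · rw [Fin.val_zero, pow_zero, one_smul, Fin.cons_zero, cons_comp_zero_succAbove,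
          symGen_snoc_self]
      · refine Finset.sum_congr rfl fun i' _ => ?_
        rw [Fin.val_succ, pow_succ, Fin.cons_succ, cons_comp_succ_succAbove, mul_neg_one]
        rfl
    rw [Finset.sum_congr rfl fun j _ => hterm j, Finset.sum_add_distrib, Finset.sum_const,
      Finset.card_univ, Fintype.card_fin]
    exact congrArg (· + _)
      (by rw [Nat.cast_smul_eq_nsmul] : (((m+1 : ℕ) : k)) • g = (m+1) • g).symm
  -- Term B
  have hB : sMap k V (m+1) n (d (m+1) n g)
      = (((n+1 : ℕ) : k)) • g + ∑ i : Fin (n+1), ∑ j : Fin (m+1), ((-1:k)^(i:ℕ)) • E j i := by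
    rw [hg, hd (m+1) n, kos_map_sum]
    have hterm : ∀ i : Fin (n+1),
        sMap k V (m+1) n (((-1:k)^(i:ℕ)) •
            (symGen k V (Fin.snoc v (x i)) ⊗ₜ[k] wedgeGen k V (x ∘ i.succAbove)))
          = g + ∑ j : Fin (m+1), ((-1:k)^(i:ℕ)) • E j i := by
      intro i
      rw [kos_map_smul, sMap_apply]
      have hlast : symGen k V (Fin.snoc v (x i) ∘ (Fin.last (m+1)).succAbove) ⊗ₜ[k]
            wedgeGen k V (Fin.cons ((Fin.snoc v (x i) : Fin (m+2) → V) (Fin.last (m+1))) (x ∘ i.succAbove))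
          = ((-1:k)^(i:ℕ)) • g := by
        rw [snoc_comp_last_succAbove, Fin.snoc_last, wedgeGen_cons_succAbove,
          TensorProduct.tmul_smul]
        rfl
      have hcast : ∀ j' : Fin (m+1),
          symGen k V (Fin.snoc v (x i) ∘ (Fin.castSucc j').succAbove) ⊗ₜ[k]
            wedgeGen k V (Fin.cons ((Fin.snoc v (x i) : Fin (m+2) → V) (Fin.castSucc j')) (x ∘ i.succAbove))
          = E j' i := by
        intro j'
        rw [snoc_comp_castSucc_succAbove, Fin.snoc_castSucc]
      rw [Fin.sum_univ_castSucc, hlast, Finset.sum_congr rfl (fun j' _ => hcast j')]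
      show ((-1:k)^(i:ℕ)) • (Finset.sum (M := KosTerm k V (m+1) (n+1)) Finset.univ
        (fun j' => E j' i) + ((-1:k)^(i:ℕ)) • g) = _
      rw [smul_add,
        smul_smul, ← pow_add, Even.neg_one_pow ⟨(i:ℕ), rfl⟩, one_smul, Finset.smul_sum]
      exact add_comm _ _
    rw [Finset.sum_congr rfl fun i _ => hterm i, Finset.sum_add_distrib, Finset.sum_const,
      Finset.card_univ, Fintype.card_fin]
    exact congrArg (· + _)
      (by rw [Nat.cast_smul_eq_nsmul] : (((n+1 : ℕ) : k)) • g = (n+1) • g).symm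
  rw [hA, hB]
  have hcomm : (∑ i : Fin (n+1), ∑ j : Fin (m+1), ((-1:k)^(i:ℕ)) • E j i)
      = ∑ j : Fin (m+1), ∑ i : Fin (n+1), ((-1:k)^(i:ℕ)) • E j i := Finset.sum_comm
  rw [hcomm]
  have hz : (∑ j : Fin (m+1), ∑ i : Fin (n+1), (-(-1:k)^(i:ℕ)) • E j i)
      + (∑ j : Fin (m+1), ∑ i : Fin (n+1), ((-1:k)^(i:ℕ)) • E j i) = 0 := by
    rw [← Finset.sum_add_distrib]
    rw [Finset.sum_eq_zero]
    intro j _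
    rw [← Finset.sum_add_distrib]
    rw [Finset.sum_eq_zero]
    intro i _
    rw [neg_smul, neg_add_cancel]
  have : ((m+1 : ℕ) : k) • g + (∑ j : Fin (m+1), ∑ i : Fin (n+1), (-(-1:k)^(i:ℕ)) • E j i)
      + (((n+1 : ℕ) : k) • g + ∑ j : Fin (m+1), ∑ i : Fin (n+1), ((-1:k)^(i:ℕ)) • E j i)
      = ((m+1 : ℕ) : k) • g + ((n+1 : ℕ) : k) • g
        + ((∑ j : Fin (m+1), ∑ i : Fin (n+1), (-(-1:k)^(i:ℕ)) • E j i)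
          + ∑ j : Fin (m+1), ∑ i : Fin (n+1), ((-1:k)^(i:ℕ)) • E j i) := by
    abel
  rw [this, hz, add_zero, ← add_smul]
  congr 1
  push_cast
  ring
lemma homotopy_inj
    (d : ∀ m n : ℕ, KosTerm k V m (n + 1) →ₗ[k] KosTerm k V (m + 1) n)
    (hd : ∀ (m n : ℕ) (v : Fin m → V) (x : Fin (n + 1) → V),
      d m n (symGen k V v ⊗ₜ[k] wedgeGen k V x) =
        ∑ i : Fin (n + 1),
          ((-1 : k) ^ (i : ℕ)) •
            (symGen k V (Fin.snoc v (x i)) ⊗ₜ[k] wedgeGen k V (x ∘ i.succAbove)))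
    (n : ℕ) :
    (sMap k V 0 n) ∘ₗ (d 0 n) = (((n + 1 : ℕ) : k)) • LinearMap.id := by
  apply kosExt k V
  intro v x
  set g : KosTerm k V 0 (n+1) := symGen k V v ⊗ₜ[k] wedgeGen k V x with hg
  rw [LinearMap.comp_apply, LinearMap.smul_apply, LinearMap.id_apply]
  rw [hg, hd 0 n, kos_map_sum]
  have hterm : ∀ i : Fin (n+1),
      sMap k V 0 n (((-1:k)^(i:ℕ)) •
          (symGen k V (Fin.snoc v (x i)) ⊗ₜ[k] wedgeGen k V (x ∘ i.succAbove))) = g := by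
    intro i
    rw [kos_map_smul, sMap_apply, Fin.sum_univ_one]
    have h0 : ((Fin.snoc v (x i) : Fin 1 → V) ∘ (0 : Fin 1).succAbove) = v :=
      funext fun l => l.elim0
    have h1 : (Fin.snoc v (x i) : Fin 1 → V) 0 = x i := by
      rw [show (0 : Fin 1) = Fin.last 0 from rfl, Fin.snoc_last]
    erw [h0, h1, wedgeGen_cons_succAbove, TensorProduct.tmul_smul, smul_smul, ← pow_add,
      Even.neg_one_pow ⟨(i:ℕ), rfl⟩, one_smul]
  rw [Finset.sum_congr rfl fun i _ => hterm i, Finset.sum_const, Finset.card_univ,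
    Fintype.card_fin]
  exact (by rw [Nat.cast_smul_eq_nsmul] : (((n+1 : ℕ) : k)) • g = (n+1) • g).symm

lemma homotopy_surj
    (d : ∀ m n : ℕ, KosTerm k V m (n + 1) →ₗ[k] KosTerm k V (m + 1) n)
    (hd : ∀ (m n : ℕ) (v : Fin m → V) (x : Fin (n + 1) → V),
      d m n (symGen k V v ⊗ₜ[k] wedgeGen k V x) =
        ∑ i : Fin (n + 1),
          ((-1 : k) ^ (i : ℕ)) •
            (symGen k V (Fin.snoc v (x i)) ⊗ₜ[k] wedgeGen k V (x ∘ i.succAbove)))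
    (m : ℕ) :
    (d m 0) ∘ₗ (sMap k V m 0) = (((m + 1 : ℕ) : k)) • LinearMap.id := by
  apply kosExt k V
  intro v x
  set g : KosTerm k V (m+1) 0 := symGen k V v ⊗ₜ[k] wedgeGen k V x with hg
  rw [LinearMap.comp_apply, LinearMap.smul_apply, LinearMap.id_apply]
  rw [hg, sMap_apply, kos_map_sum]
  have hterm : ∀ j : Fin (m+1),
      d m 0 (symGen k V (v ∘ j.succAbove) ⊗ₜ[k] wedgeGen k V (Fin.cons (v j) x)) = g := by
    intro j
    rw [hd m 0, Fin.sum_univ_one]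
    have h0 : ((Fin.cons (v j) x : Fin 1 → V) ∘ (0 : Fin 1).succAbove) = x :=
      funext fun l => l.elim0
    have h1 : (Fin.cons (v j) x : Fin 1 → V) 0 = v j := rfl
    rw [h0, h1, Fin.val_zero, pow_zero, one_smul, symGen_snoc_self]
  rw [Finset.sum_congr rfl fun j _ => hterm j, Finset.sum_const, Finset.card_univ,
    Fintype.card_fin]
  exact (by rw [Nat.cast_smul_eq_nsmul] : (((m+1 : ℕ) : k)) • g = (m+1) • g).symm
lemma succAbove_succAbove_comm {n : ℕ} (a b : Fin (n+1)) (hab : a ≤ b) :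
    (Fin.castSucc a).succAbove ∘ b.succAbove = (Fin.succ b).succAbove ∘ a.succAbove := by
  funext l
  simp only [Function.comp_apply, Fin.succAbove, Fin.lt_def]
  rcases a with ⟨a, ha⟩
  rcases b with ⟨b, hb⟩
  rcases l with ⟨l, hl⟩
  simp only [Fin.le_def] at hab
  split_ifs <;> (apply Fin.ext) <;> simp_all <;> omega

lemma dd_zero
    (d : ∀ m n : ℕ, KosTerm k V m (n + 1) →ₗ[k] KosTerm k V (m + 1) n)
    (hd : ∀ (m n : ℕ) (v : Fin m → V) (x : Fin (n + 1) → V),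
      d m n (symGen k V v ⊗ₜ[k] wedgeGen k V x) =
        ∑ i : Fin (n + 1),
          ((-1 : k) ^ (i : ℕ)) •
            (symGen k V (Fin.snoc v (x i)) ⊗ₜ[k] wedgeGen k V (x ∘ i.succAbove)))
    (m n : ℕ) : (d (m+1) n) ∘ₗ (d m (n+1)) = 0 := by
  apply kosExt k V
  intro v x
  erw [LinearMap.comp_apply, LinearMap.zero_apply]
  rw [hd m (n+1)]
  rw [kos_map_sum]
  set F : Fin (n+2) × Fin (n+1) → KosTerm k V (m+2) n := fun p =>
    ((-1:k)^(p.1:ℕ) * (-1:k)^(p.2:ℕ)) •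
      (symGen k V (Fin.snoc (Fin.snoc v (x p.1)) (x (p.1.succAbove p.2))) ⊗ₜ[k]
        wedgeGen k V (x ∘ (p.1.succAbove ∘ p.2.succAbove))) with hF
  have hstep : ∀ i : Fin (n+2),
      d (m+1) n (((-1:k)^(i:ℕ)) •
          (symGen k V (Fin.snoc v (x i)) ⊗ₜ[k] wedgeGen k V (x ∘ i.succAbove)))
        = ∑ i' : Fin (n+1), F (i, i') := by
    intro i
    rw [kos_map_smul, hd (m+1) n]
    refine (Finset.smul_sum (N := SymPow k V (m+2) ⊗[k] ⋀[k]^n V)).trans ?_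
    refine Finset.sum_congr rfl fun i' _ => ?_
    rw [hF]
    exact smul_smul _ _ _
  rw [Finset.sum_congr rfl fun i _ => hstep i]
  rw [← Finset.sum_product']
  rw [show ((Finset.univ : Finset (Fin (n+2))) ×ˢ (Finset.univ : Finset (Fin (n+1))))
    = (Finset.univ : Finset (Fin (n+2) × Fin (n+1))) from Finset.univ_product_univ]
  -- the sign-reversing involution
  set φ : Fin (n+2) × Fin (n+1) → Fin (n+2) × Fin (n+1) := fun p =>
    if h : p.1 ≤ Fin.castSucc p.2
    then (Fin.succ p.2, p.1.castPred (Fin.ne_last_of_lt (lt_of_le_of_lt h (Fin.castSucc_lt_last p.2))))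
    else (Fin.castSucc p.2, p.1.pred (Fin.ne_zero_of_lt (lt_of_le_of_lt (Fin.zero_le _) (not_le.mp h))))
    with hφ
  have hφ1 : ∀ (a : Fin (n+2)) (b : Fin (n+1)) (h : a ≤ Fin.castSucc b),
      φ (a, b) = (Fin.succ b, a.castPred (Fin.ne_last_of_lt (lt_of_le_of_lt h (Fin.castSucc_lt_last b)))) := by
    intro a b h
    simp only [hφ]
    rw [dif_pos h]
  have hφ2 : ∀ (a : Fin (n+2)) (b : Fin (n+1)) (h : ¬ a ≤ Fin.castSucc b),
      φ (a, b) = (Fin.castSucc b, a.pred (Fin.ne_zero_of_lt (lt_of_le_of_lt (Fin.zero_le _) (not_le.mp h)))) := by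
    intro a b h
    simp only [hφ]
    rw [dif_neg h]
  have hinv : ∀ p, φ (φ p) = p := by
    rintro ⟨a, b⟩
    by_cases h : a ≤ Fin.castSucc b
    · rw [hφ1 a b h]
      have h2 : ¬ (Fin.succ b ≤ Fin.castSucc (a.castPred (Fin.ne_last_of_lt (lt_of_le_of_lt h (Fin.castSucc_lt_last b))))) := by
        rw [Fin.castSucc_castPred]
        intro hc
        exact absurd (lt_of_lt_of_le (Fin.castSucc_lt_succ (i := b)) hc) (not_lt.mpr h)
      rw [hφ2 _ _ h2]
      ext
      · simp [Fin.pred_succ]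
      · simp [Fin.castSucc_castPred]
    · rw [hφ2 a b h]
      have h2 : Fin.castSucc b ≤ Fin.castSucc (a.pred (Fin.ne_zero_of_lt (lt_of_le_of_lt (Fin.zero_le _) (not_le.mp h)))) := by
        rw [Fin.castSucc_le_castSucc_iff, Fin.le_pred_iff]
        exact (not_le.mp h)
      rw [hφ1 _ _ h2]
      ext
      · simp [Fin.succ_pred]
      · simp [Fin.castPred_castSucc]
  have hbr1 : ∀ p : Fin (n+2) × Fin (n+1), p.1 ≤ Fin.castSucc p.2 → F p + F (φ p) = 0 := by
    rintro ⟨a, b⟩ h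
    have ha : a ≠ Fin.last (n+1) :=
      Fin.ne_last_of_lt (lt_of_le_of_lt h (Fin.castSucc_lt_last b))
    rw [hφ1 a b h]
    -- signs
    have hsign : ((-1:k)^((Fin.succ b : Fin (n+2)):ℕ) * (-1:k)^((a.castPred ha : Fin (n+1)):ℕ))
        = -(((-1:k)^(a:ℕ)) * ((-1:k)^(b:ℕ))) := by
      rw [Fin.val_succ, Fin.coe_castPred]
      ring
    -- first removed entry
    have he1 : a.succAbove b = Fin.succ b := Fin.succAbove_of_le_castSucc a b h
    have he2 : (Fin.succ b).succAbove (a.castPred ha) = a := by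
      rw [Fin.succAbove_of_castSucc_lt]
      · exact Fin.castSucc_castPred a ha
      · rw [Fin.castSucc_castPred]
        exact lt_of_le_of_lt h (Fin.castSucc_lt_succ (i := b))
    have hsym : symGen k V (Fin.snoc (Fin.snoc v (x (Fin.succ b))) (x ((Fin.succ b).succAbove (a.castPred ha))))
        = symGen k V (Fin.snoc (Fin.snoc v (x a)) (x (a.succAbove b))) := by
      rw [he1, he2]
      exact symGen_snoc_snoc_swap k V v (x (Fin.succ b)) (x a)
    have hwedge : (x ∘ ((Fin.succ b).succAbove ∘ (a.castPred ha).succAbove))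
        = x ∘ (a.succAbove ∘ b.succAbove) := by
      have := succAbove_succAbove_comm (a.castPred ha) b
        (by rwa [← Fin.castSucc_le_castSucc_iff, Fin.castSucc_castPred])
      rw [← this, Fin.castSucc_castPred]
    have hFφ : F (Fin.succ b, a.castPred ha) = - F (a, b) := by
      rw [hF]
      simp only []
      rw [hsym, hwedge, hsign]
      exact neg_smul _ _
    rw [hFφ, add_neg_cancel]
  apply Finset.sum_ninvolution φ
  · rintro ⟨a, b⟩
    by_cases h : a ≤ Fin.castSucc b
    · exact hbr1 (a, b) h
    · have h2 : (φ (a, b)).1 ≤ Fin.castSucc ((φ (a, b)).2) := by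
        rw [hφ2 a b h]
        rw [Fin.castSucc_le_castSucc_iff, Fin.le_pred_iff]
        exact (not_le.mp h)
      have h3 := hbr1 (φ (a, b)) h2
      rw [hinv (a, b)] at h3
      show F (a, b) + F (φ (a, b)) = 0
      exact add_comm (F (φ (a, b))) (F (a, b)) ▸ h3
  · rintro ⟨a, b⟩ _
    by_cases h : a ≤ Fin.castSucc b
    · intro hc
      have h4 : (φ (a, b)).1 = a := congrArg Prod.fst hc
      rw [hφ1 a b h] at h4
      have h4' : Fin.succ b = a := h4
      have h5 : a < Fin.succ b := lt_of_le_of_lt h (Fin.castSucc_lt_succ (i := b))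
      rw [h4'] at h5
      exact absurd h5 (lt_irrefl _)
    · intro hc
      have h4 : (φ (a, b)).1 = a := congrArg Prod.fst hc
      rw [hφ2 a b h] at h4
      have h4' : Fin.castSucc b = a := h4
      have h5 := not_le.mp h
      rw [h4'] at h5
      exact absurd h5 (lt_irrefl _)
  · intro p
    exact Finset.mem_univ _
  · exact hinv
/-- the Koszul complex of the symmetric algebra.  Let `d` be the family of
linear maps `Sym^m(V) ⊗ Λ^{n+1}(V) → Sym^{m+1}(V) ⊗ Λⁿ(V)` given on generators by
`d(a ⊗ x₁∧…∧x_{n+1}) = Σ_i (−1)^{i−1} (a·x_i) ⊗ x₁∧…∧x̂_i∧…∧x_{n+1}`.  Then the complex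
is exact everywhere except at the term `Sym⁰(V) ⊗ Λ⁰(V)`, where the homology is the
ground field `k`. -/
theorem stmt16
    (d : ∀ m n : ℕ, KosTerm k V m (n + 1) →ₗ[k] KosTerm k V (m + 1) n)
    (hd : ∀ (m n : ℕ) (v : Fin m → V) (x : Fin (n + 1) → V),
      d m n (symGen k V v ⊗ₜ[k] wedgeGen k V x) =
        ∑ i : Fin (n + 1),
          ((-1 : k) ^ (i : ℕ)) •
            (symGen k V (Fin.snoc v (x i)) ⊗ₜ[k] wedgeGen k V (x ∘ i.succAbove))) :
    (∀ m n : ℕ, Function.Exact (d m (n + 1)) (d (m + 1) n)) ∧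
    (∀ n : ℕ, Function.Injective (d 0 n)) ∧
    (∀ m : ℕ, Function.Surjective (d m 0)) ∧
    Nonempty (KosTerm k V 0 0 ≃ₗ[k] k) := by
  refine ⟨?_, ?_, ?_, ?_⟩
  · -- exactness
    intro m n
    rw [LinearMap.exact_iff]
    apply le_antisymm
    · -- ker ⊆ range
      intro z hz
      rw [LinearMap.mem_ker] at hz
      have hcne : ((m + n + 2 : ℕ) : k) ≠ 0 := Nat.cast_ne_zero.mpr (by omega)
      have hid := LinearMap.congr_fun (homotopy_main k V d hd m n) z
      rw [LinearMap.add_apply, LinearMap.comp_apply, LinearMap.comp_apply, hz, map_zero,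
        add_zero, LinearMap.smul_apply, LinearMap.id_apply] at hid
      refine ⟨(((m + n + 2 : ℕ) : k))⁻¹ • sMap k V m (n+1) z, ?_⟩
      rw [map_smul, hid, smul_smul, inv_mul_cancel₀ hcne, one_smul]
    · -- range ⊆ ker
      rintro _ ⟨y, rfl⟩
      rw [LinearMap.mem_ker]
      have := LinearMap.congr_fun (dd_zero k V d hd m n) y
      rwa [LinearMap.comp_apply, LinearMap.zero_apply] at this
  · -- injectivity
    intro n
    have hcne : ((n + 1 : ℕ) : k) ≠ 0 := Nat.cast_ne_zero.mpr (by omega)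
    intro z w hzw
    have hz := LinearMap.congr_fun (homotopy_inj k V d hd n) z
    have hw := LinearMap.congr_fun (homotopy_inj k V d hd n) w
    rw [LinearMap.comp_apply, LinearMap.smul_apply, LinearMap.id_apply] at hz hw
    rw [hzw, hw] at hz
    exact (smul_right_injective _ hcne hz).symm
  · -- surjectivity
    intro m w
    have hcne : ((m + 1 : ℕ) : k) ≠ 0 := Nat.cast_ne_zero.mpr (by omega)
    refine ⟨(((m + 1 : ℕ) : k))⁻¹ • sMap k V m 0 w, ?_⟩
    have hw := LinearMap.congr_fun (homotopy_surj k V d hd m) w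
    rw [LinearMap.comp_apply, LinearMap.smul_apply, LinearMap.id_apply] at hw
    rw [map_smul, hw, smul_smul, inv_mul_cancel₀ hcne, one_smul]
  · -- KosTerm 0 0 ≃ k
    have hbot : symRel k V 0 = ⊥ := by
      rw [symRel, Submodule.span_eq_bot]
      rintro x ⟨t, σ, rfl⟩
      have hσ : σ = Equiv.refl (Fin 0) := by
        ext i
        exact i.elim0
      rw [hσ, PiTensorProduct.reindex_refl, LinearEquiv.refl_apply, sub_self]
    have e1 : SymPow k V 0 ≃ₗ[k] k :=
      (Submodule.quotEquivOfEqBot _ hbot).trans (PiTensorProduct.isEmptyEquiv (Fin 0))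
    have hinj : Function.Injective (Algebra.linearMap k (ExteriorAlgebra k V)) :=
      (ExteriorAlgebra.algebraMap_leftInverse V).injective
    have h0 : (⋀[k]^0 V) = LinearMap.range (Algebra.linearMap k (ExteriorAlgebra k V)) := by
      show LinearMap.range (ExteriorAlgebra.ι k : V →ₗ[k] ExteriorAlgebra k V) ^ 0
        = LinearMap.range (Algebra.linearMap k (ExteriorAlgebra k V))
      rw [pow_zero, Submodule.one_eq_range]
    have e2 : (⋀[k]^0 V) ≃ₗ[k] k :=
      (LinearEquiv.ofEq _ _ h0).trans (LinearEquiv.ofInjective _ hinj).symm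
    exact ⟨(TensorProduct.congr e1 e2).trans (TensorProduct.lid k k)⟩
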